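/- With Δ_f as above, if D is an irreducible effective divisor on ℙ^N not containing H which is preperiodic under f_* (i.e., f_*^{n+k} D and f_*^n D are supported on the same irreducible hypersurface for some n ≥ 0, k ≥ 1), then Δ_f(D) = 0. -/

import Mathlib

open MvPolynomial Filter

/-- The sup norm of the coefficients of a multivariate polynomial over a normed field. -/
noncomputable def coeffNorm {σ K : Type*} [NormedField K] (F : MvPolynomial σ K) : ℝ :=
  ((F.support.sup fun m => ‖F.coeff m‖₊ : NNReal) : ℝ)

/-- Restriction of a form in `N+1` variables to the hyperplane `H = {X_{N+1} = 0}`. -/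
noncomputable def resH {K : Type*} [Field K] {N : ℕ}
    (F : MvPolynomial (Fin (N + 1)) K) : MvPolynomial (Fin (N + 1)) K :=
  MvPolynomial.aeval (fun i => if i = Fin.last N then 0 else MvPolynomial.X i) F

/-- `λ(D) = log‖F‖ - log‖F|_H‖` for a defining form `F`. -/
noncomputable def lamDiv {K : Type*} [NormedField K] {N : ℕ}
    (F : MvPolynomial (Fin (N + 1)) K) : ℝ :=
  Real.log (coeffNorm F) - Real.log (coeffNorm (resH F))

/-- The block matrix `L = [[A, b], [0, 1]]` associated to `f(X) = A·X^d + b`. -/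
noncomputable def blockL {K : Type*} [Field K] {N : ℕ} (A : Matrix (Fin N) (Fin N) K)
    (b : Fin N → K) : Matrix (Fin (N + 1)) (Fin (N + 1)) K :=
  Matrix.of fun i j =>
    if hi : (i : ℕ) < N then
      (if hj : (j : ℕ) < N then A ⟨i, hi⟩ ⟨j, hj⟩ else b ⟨i, hi⟩)
    else (if (j : ℕ) < N then 0 else 1)

/-- The homogeneous forms `F_i = ∑_j L_{i,j} X_j^d` defining `f` on `ℙ^N`. -/
noncomputable def fForms {K : Type*} [Field K] {N : ℕ} (A : Matrix (Fin N) (Fin N) K)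
    (b : Fin N → K) (d : ℕ) : Fin (N + 1) → MvPolynomial (Fin (N + 1)) K :=
  fun i => ∑ j, MvPolynomial.C (blockL A b i j) * MvPolynomial.X j ^ d

/-- The twist `F_ζ(X₁,…,X_{N+1}) = F(ζ₁X₁,…,ζ_N X_N, X_{N+1})`. -/
noncomputable def twist {K : Type*} [Field K] {N : ℕ} (ζ : Fin N → K)
    (F : MvPolynomial (Fin (N + 1)) K) : MvPolynomial (Fin (N + 1)) K :=
  MvPolynomial.aeval (fun i : Fin (N + 1) =>
    if h : (i : ℕ) < N then MvPolynomial.C (ζ ⟨i, h⟩) * MvPolynomial.X i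
    else MvPolynomial.X i) F

/-- `G` defines the pushforward `f_*D` of the divisor defined by `F`. -/
def IsPush {K : Type*} [NormedField K] {N : ℕ} (A : Matrix (Fin N) (Fin N) K)
    (b : Fin N → K) (d : ℕ) (F G : MvPolynomial (Fin (N + 1)) K) : Prop :=
  ∃ c : K, c ≠ 0 ∧
    MvPolynomial.aeval (fForms A b d) G =
      c • ∏ ζ ∈ Fintype.piFinset (fun _ : Fin N => Polynomial.nthRootsFinset d (1 : K)),
        twist ζ F

/-- A chain of successive pushforwards `c k = f_*^k D` starting at `D = F`. -/
def PushChain {K : Type*} [NormedField K] {N : ℕ} (A : Matrix (Fin N) (Fin N) K)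
    (b : Fin N → K) (d : ℕ) (F : MvPolynomial (Fin (N + 1)) K)
    (c : ℕ → MvPolynomial (Fin (N + 1)) K) : Prop :=
  c 0 = F ∧ ∀ k, IsPush A b d (c k) (c (k + 1))

/-!
Let `Φ = aeval (fForms A b d)` be pullback by `f` and `T F = ∏_ζ F_ζ`, so that `G` defines
`f_*D` exactly when `Φ G` and `T F` are associated. Since `Φ` is injective and multiplies total
degrees by `d`, while `T` multiplies them by at most `d^N`, we get
`deg f_*^m D ≤ d^{(N-1)m} deg D`. Injectivity of `Φ` also carries a relation
`(f_*^n D)^{e'} ∼ (f_*^{n+k} D)^e` forward along the orbit, so by unique factorization every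
`f_*^{n+sk} D` is defined by a power `q^M` of the same irreducible form `q`, with `M ≤ deg`.
For powers, `λ(q^M) = O(M)`: the coefficient norm of `q^M` lies between `|lc q|^M` (the leading
coefficient for a monomial order is multiplicative) and `(#supp q · ‖q‖)^M`. Hence
`|λ(f_*^m D)| / d^{Nm} = O(d^{-m})` along `m = n + sk`, so the limit is `0`.
-/

theorem exists_associated_pow_of_pow_associated {M : Type*} [CommMonoidWithZero M]
    [IsCancelMulZero M] {q P : M} (hq : Prime q) {e m : ℕ} (he : e ≠ 0)
    (h : Associated (q ^ m) (P ^ e)) : ∃ i, Associated (q ^ i) P := by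
  obtain ⟨i, -, hi⟩ := (dvd_prime_pow hq m).mp ((dvd_pow_self P he).trans h.symm.dvd)
  exact ⟨i, hi.symm⟩

namespace MvPolynomial

section Field

variable {σ τ K : Type*} [Field K]

theorem associated_iff_exists_smul {P Q : MvPolynomial σ K} :
    Associated P Q ↔ ∃ a : K, a ≠ 0 ∧ a • P = Q := by
  constructor
  · rintro ⟨u, rfl⟩
    obtain ⟨r, hr, hu⟩ := isUnit_iff_eq_C_of_isReduced.mp u.isUnit
    exact ⟨r, hr.ne_zero, by rw [hu, smul_eq_C_mul, mul_comm]⟩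
  · rintro ⟨a, ha, rfl⟩
    rw [smul_eq_C_mul, mul_comm]
    exact associated_mul_unit_right P _ ((isUnit_iff_ne_zero.mpr ha).map C)

theorem totalDegree_eq_of_associated {P Q : MvPolynomial σ K} (h : Associated P Q) :
    P.totalDegree = Q.totalDegree := by
  obtain ⟨a, ha, rfl⟩ := associated_iff_exists_smul.mp h
  simp only [totalDegree, support_smul_eq ha]

theorem associated_of_map_associated {φ : MvPolynomial σ K →ₐ[K] MvPolynomial τ K}
    (hφ : Function.Injective φ) {P Q : MvPolynomial σ K} (h : Associated (φ P) (φ Q)) :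
    Associated P Q := by
  obtain ⟨a, ha, h⟩ := associated_iff_exists_smul.mp h
  rw [← map_smul] at h
  exact associated_iff_exists_smul.mpr ⟨a, ha, hφ h⟩

theorem totalDegree_pow_of_isDomain {R : Type*} [CommRing R] [IsDomain R]
    (P : MvPolynomial σ R) (n : ℕ) :
    (P ^ n).totalDegree = n * P.totalDegree := by
  rcases eq_or_ne P 0 with rfl | hP
  · cases n <;> simp
  induction n with
  | zero => simp
  | succ n ih => rw [pow_succ, totalDegree_mul_of_isDomain (pow_ne_zero n hP) hP, ih]; ring

theorem one_le_totalDegree_of_irreducible {q : MvPolynomial σ K} (hq : Irreducible q) :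
    1 ≤ q.totalDegree := by
  by_contra! h
  have hC := totalDegree_eq_zero_iff_eq_C.mp (Nat.lt_one_iff.mp h)
  refine hq.not_isUnit (hC ▸ (isUnit_iff_ne_zero.mpr fun h0 => hq.ne_zero ?_).map C)
  rw [hC, h0, map_zero]

theorem aeval_aeval_eq {R υ : Type*} [CommSemiring R] (f : σ → MvPolynomial τ R)
    (g : τ → MvPolynomial υ R) (P : MvPolynomial σ R) :
    aeval g (aeval f P) = aeval (fun i => aeval g (f i)) P := by
  rw [← AlgHom.comp_apply, comp_aeval]

theorem aeval_injective_of_surjective_eval [Infinite K] {f : σ → MvPolynomial τ K}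
    (hf : Function.Surjective fun x : τ → K => fun i => eval x (f i)) :
    Function.Injective (aeval f : MvPolynomial σ K →ₐ[K] MvPolynomial τ K) := by
  refine (injective_iff_map_eq_zero _).mpr fun P hP => MvPolynomial.funext fun z => ?_
  obtain ⟨x, rfl⟩ := hf z
  have h := congrArg (aeval x) hP
  rwa [aeval_eq_bind₁, aeval_bind₁, map_zero] at h

end Field

section AevalHomogeneous

variable {σ τ R : Type*} [CommRing R] {e : ℕ} {f : σ → MvPolynomial τ R}

theorem homogeneousComponent_totalDegree_ne_zero {P : MvPolynomial σ R} (hP : P ≠ 0) :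
    homogeneousComponent P.totalDegree P ≠ 0 := by
  obtain ⟨m, hm, hdeg⟩ := Finset.exists_mem_eq_sup P.support (support_nonempty.mpr hP)
    fun m => m.degree
  intro h
  have := congrArg (coeff m) h
  rw [coeff_homogeneousComponent, if_pos, coeff_zero] at this
  · exact mem_support_iff.mp hm this
  · exact hdeg.symm

theorem homogeneousComponent_aeval (hf : ∀ i, (f i).IsHomogeneous e) (he : e ≠ 0)
    (P : MvPolynomial σ R) (i : ℕ) :
    homogeneousComponent (e * i) (aeval f P) = aeval f (homogeneousComponent i P) := by
  conv_lhs => rw [← sum_homogeneousComponent P, map_sum, map_sum]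
  rw [Finset.sum_eq_single i]
  · exact homogeneousComponent_eq_self ((homogeneousComponent_isHomogeneous i P).aeval f hf)
  · intro j _ hji
    rw [homogeneousComponent_of_mem ((homogeneousComponent_isHomogeneous j P).aeval f hf),
      if_neg fun h => hji (Nat.eq_of_mul_eq_mul_left (Nat.pos_of_ne_zero he) h).symm]
  · intro hi
    rw [homogeneousComponent_eq_zero i P (by simpa using hi), map_zero, map_zero]

theorem totalDegree_aeval_le (hf : ∀ i, (f i).IsHomogeneous e) (P : MvPolynomial σ R) :
    (aeval f P).totalDegree ≤ e * P.totalDegree := by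
  conv_lhs => rw [← sum_homogeneousComponent P, map_sum]
  refine totalDegree_finsetSum_le fun i hi => ?_
  exact ((homogeneousComponent_isHomogeneous i P).aeval f hf).totalDegree_le.trans
    (Nat.mul_le_mul_left e (Nat.lt_succ_iff.mp (Finset.mem_range.mp hi)))

theorem le_totalDegree_aeval (hf : ∀ i, (f i).IsHomogeneous e)
    (hinj : Function.Injective (aeval f : MvPolynomial σ R →ₐ[R] MvPolynomial τ R))
    (P : MvPolynomial σ R) : e * P.totalDegree ≤ (aeval f P).totalDegree := by
  rcases eq_or_ne e 0 with rfl | he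
  · simp
  rcases eq_or_ne P 0 with rfl | hP
  · simp
  by_contra! h
  apply homogeneousComponent_totalDegree_ne_zero hP
  apply (injective_iff_map_eq_zero _).mp hinj
  rw [← homogeneousComponent_aeval hf he, homogeneousComponent_eq_zero _ _ h]

end AevalHomogeneous

end MvPolynomial

section CoeffNorm

variable {σ K : Type*} [NormedField K]

theorem coeffNorm_nonneg (P : MvPolynomial σ K) : 0 ≤ coeffNorm P :=
  NNReal.coe_nonneg _

theorem norm_coeff_le_coeffNorm (P : MvPolynomial σ K) (m : σ →₀ ℕ) :
    ‖P.coeff m‖ ≤ coeffNorm P := by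
  by_cases hm : m ∈ P.support
  · exact_mod_cast Finset.le_sup (f := fun m => ‖P.coeff m‖₊) hm
  · simpa [notMem_support_iff.mp hm] using coeffNorm_nonneg P

theorem coeffNorm_pos {P : MvPolynomial σ K} (hP : P ≠ 0) : 0 < coeffNorm P := by
  obtain ⟨m, hm⟩ := support_nonempty.mpr hP
  exact (norm_pos_iff.mpr (mem_support_iff.mp hm)).trans_le (norm_coeff_le_coeffNorm P m)

theorem coeffNorm_le {P : MvPolynomial σ K} {B : ℝ} (hB : 0 ≤ B)
    (h : ∀ m, ‖P.coeff m‖ ≤ B) : coeffNorm P ≤ B :=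
  show ((_ : NNReal) : ℝ) ≤ ((⟨B, hB⟩ : NNReal) : ℝ) from
    NNReal.coe_le_coe.mpr (Finset.sup_le fun m _ => h m)

theorem coeffNorm_smul (a : K) (P : MvPolynomial σ K) :
    coeffNorm (a • P) = ‖a‖ * coeffNorm P := by
  rcases eq_or_ne a 0 with rfl | ha
  · simp [coeffNorm]
  · simp only [coeffNorm, support_smul_eq ha, coeff_smul, smul_eq_mul, nnnorm_mul,
      ← NNReal.mul_finset_sup, NNReal.coe_mul, coe_nnnorm]

theorem coeffNorm_mul_le (P Q : MvPolynomial σ K) :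
    coeffNorm (P * Q) ≤ P.support.card * coeffNorm P * coeffNorm Q := by
  classical
  have hP := coeffNorm_nonneg P
  have hQ := coeffNorm_nonneg Q
  refine coeffNorm_le (by positivity) fun m => ?_
  conv_lhs => rw [P.as_sum, Finset.sum_mul, coeff_sum]
  calc ‖∑ a ∈ P.support, (monomial a (P.coeff a) * Q).coeff m‖
      ≤ ∑ a ∈ P.support, ‖(monomial a (P.coeff a) * Q).coeff m‖ := norm_sum_le _ _
    _ ≤ ∑ _a ∈ P.support, coeffNorm P * coeffNorm Q := by
      refine Finset.sum_le_sum fun a _ => ?_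
      rw [coeff_monomial_mul']
      split_ifs
      · rw [norm_mul]
        exact mul_le_mul (norm_coeff_le_coeffNorm P a) (norm_coeff_le_coeffNorm Q _)
          (norm_nonneg _) hP
      · simpa using mul_nonneg hP hQ
    _ = P.support.card * coeffNorm P * coeffNorm Q := by
      rw [Finset.sum_const, nsmul_eq_mul, mul_assoc]

theorem coeffNorm_pow_le (P : MvPolynomial σ K) (M : ℕ) :
    coeffNorm (P ^ M) ≤ (P.support.card * coeffNorm P) ^ M := by
  induction M with
  | zero =>
    classical
    refine coeffNorm_le zero_le_one fun m => ?_
    rw [pow_zero, coeff_one]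
    split_ifs <;> simp
  | succ M ih =>
    have := coeffNorm_nonneg P
    calc coeffNorm (P ^ (M + 1)) ≤ P.support.card * coeffNorm P * coeffNorm (P ^ M) := by
          rw [pow_succ']; exact coeffNorm_mul_le P _
      _ ≤ P.support.card * coeffNorm P * (P.support.card * coeffNorm P) ^ M := by gcongr
      _ = (P.support.card * coeffNorm P) ^ (M + 1) := by ring

theorem MonomialOrder.norm_leadingCoeff_pow_le (m : MonomialOrder σ) (P : MvPolynomial σ K)
    (M : ℕ) : ‖m.leadingCoeff P‖ ^ M ≤ coeffNorm (P ^ M) := by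
  rw [← norm_pow, ← m.leadingCoeff_pow]
  exact norm_coeff_le_coeffNorm _ _

theorem exists_abs_log_coeffNorm_pow_le {P : MvPolynomial σ K} (hP : P ≠ 0) :
    ∃ C, ∀ M : ℕ, |Real.log (coeffNorm (P ^ M))| ≤ C * M := by
  obtain ⟨_, _⟩ := exists_wellFoundedGT σ
  set lower := Real.log ‖MonomialOrder.lex.leadingCoeff P‖
  set upper := Real.log (P.support.card * coeffNorm P)
  refine ⟨|lower| + |upper|, fun M => ?_⟩
  have hlc := MonomialOrder.lex.norm_leadingCoeff_pow_le P M
  have hpos : 0 < ‖MonomialOrder.lex.leadingCoeff P‖ ^ M :=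
    pow_pos (norm_pos_iff.mpr (MonomialOrder.lex.leadingCoeff_ne_zero_iff.mpr hP)) M
  have hlower : M * lower ≤ Real.log (coeffNorm (P ^ M)) := by
    rw [← Real.log_pow]; exact Real.log_le_log hpos hlc
  have hupper : Real.log (coeffNorm (P ^ M)) ≤ M * upper := by
    rw [← Real.log_pow]; exact Real.log_le_log (hpos.trans_le hlc) (coeffNorm_pow_le P M)
  have hM : (0 : ℝ) ≤ M := M.cast_nonneg
  rw [abs_le]
  constructor <;> nlinarith [neg_abs_le lower, le_abs_self upper, abs_nonneg lower,
    abs_nonneg upper]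

end CoeffNorm

section LamDiv

variable {K : Type*} [NormedField K] {N : ℕ}

theorem ne_zero_of_resH_ne_zero {P : MvPolynomial (Fin (N + 1)) K} (h : resH P ≠ 0) : P ≠ 0 := by
  rintro rfl
  exact h (map_zero _)

theorem lamDiv_smul {a : K} (ha : a ≠ 0) {P : MvPolynomial (Fin (N + 1)) K} (hP : resH P ≠ 0) :
    lamDiv (a • P) = lamDiv P := by
  have ha' : ‖a‖ ≠ 0 := norm_ne_zero_iff.mpr ha
  rw [lamDiv, lamDiv, resH, map_smul, ← resH, coeffNorm_smul, coeffNorm_smul,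
    Real.log_mul ha' (coeffNorm_pos (ne_zero_of_resH_ne_zero hP)).ne',
    Real.log_mul ha' (coeffNorm_pos hP).ne']
  ring

theorem lamDiv_eq_of_associated {P Q : MvPolynomial (Fin (N + 1)) K} (h : Associated P Q)
    (hP : resH P ≠ 0) : lamDiv Q = lamDiv P := by
  obtain ⟨a, ha, rfl⟩ := associated_iff_exists_smul.mp h
  exact lamDiv_smul ha hP

theorem lamDiv_eq_zero_of_totalDegree_eq_zero {P : MvPolynomial (Fin (N + 1)) K}
    (h : P.totalDegree = 0) : lamDiv P = 0 := by
  rw [totalDegree_eq_zero_iff_eq_C.mp h, lamDiv, resH, aeval_C, algebraMap_eq, sub_self]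

theorem exists_abs_lamDiv_pow_le {P : MvPolynomial (Fin (N + 1)) K} (hP : resH P ≠ 0) :
    ∃ C, ∀ M : ℕ, |lamDiv (P ^ M)| ≤ C * M := by
  obtain ⟨C₁, hC₁⟩ := exists_abs_log_coeffNorm_pow_le (ne_zero_of_resH_ne_zero hP)
  obtain ⟨C₂, hC₂⟩ := exists_abs_log_coeffNorm_pow_le hP
  refine ⟨C₁ + C₂, fun M => ?_⟩
  rw [lamDiv, resH, map_pow, ← resH]
  calc _ ≤ |Real.log (coeffNorm (P ^ M))| + |Real.log (coeffNorm (resH P ^ M))| := abs_sub _ _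
    _ ≤ C₁ * M + C₂ * M := add_le_add (hC₁ M) (hC₂ M)
    _ = (C₁ + C₂) * M := by ring

theorem exists_abs_lamDiv_le_of_associated_pow {q : MvPolynomial (Fin (N + 1)) K}
    (hq : Irreducible q) (hH : resH q ≠ 0) :
    ∃ C, 0 ≤ C ∧ ∀ (M : ℕ) (P : MvPolynomial (Fin (N + 1)) K), Associated (q ^ M) P →
      |lamDiv P| ≤ C * P.totalDegree := by
  obtain ⟨C, hC⟩ := exists_abs_lamDiv_pow_le hH
  refine ⟨|C|, abs_nonneg C, fun M P hP => ?_⟩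
  have hqM : resH (q ^ M) ≠ 0 := by
    rw [resH, map_pow]
    exact pow_ne_zero M hH
  have hdeg : (M : ℝ) ≤ P.totalDegree := by
    have h := totalDegree_le_of_dvd_of_isDomain hP.dvd
      (hP.ne_zero_iff.mp (ne_zero_of_resH_ne_zero hqM))
    rw [totalDegree_pow_of_isDomain] at h
    exact_mod_cast (Nat.le_mul_of_pos_right M (one_le_totalDegree_of_irreducible hq)).trans h
  rw [lamDiv_eq_of_associated hP hqM]
  calc |lamDiv (q ^ M)| ≤ C * M := hC M
    _ ≤ |C| * M := by gcongr; exact le_abs_self C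
    _ ≤ |C| * P.totalDegree := by gcongr

end LamDiv

section Pullback

variable {K : Type*} [Field K] {N : ℕ}

theorem blockL_last_castSucc (A : Matrix (Fin N) (Fin N) K) (b : Fin N → K) (j : Fin N) :
    blockL A b (Fin.last N) j.castSucc = 0 := by
  simp [blockL]

theorem blockL_last_last (A : Matrix (Fin N) (Fin N) K) (b : Fin N → K) :
    blockL A b (Fin.last N) (Fin.last N) = 1 := by
  simp [blockL]

theorem det_blockL (A : Matrix (Fin N) (Fin N) K) (b : Fin N → K) :
    (blockL A b).det = A.det := by
  have hA : (blockL A b).submatrix (Fin.last N).succAbove (Fin.last N).succAbove = A := by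
    ext i j
    simp [blockL, Fin.succAbove_last]
  rw [Matrix.det_succ_row _ (Fin.last N), Fin.sum_univ_castSucc]
  simp only [blockL_last_castSucc, blockL_last_last, hA, mul_zero, zero_mul,
    Finset.sum_const_zero, zero_add, mul_one]
  rw [← two_mul, pow_mul, neg_one_sq, one_pow, one_mul]

theorem fForms_isHomogeneous (A : Matrix (Fin N) (Fin N) K) (b : Fin N → K) (d : ℕ)
    (i : Fin (N + 1)) : (fForms A b d i).IsHomogeneous d :=
  IsHomogeneous.sum _ _ _ fun _ _ => isHomogeneous_C_mul_X_pow _ _ _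

theorem fForms_last (A : Matrix (Fin N) (Fin N) K) (b : Fin N → K) (d : ℕ) :
    fForms A b d (Fin.last N) = X (Fin.last N) ^ d := by
  simp only [fForms, Fin.sum_univ_castSucc, blockL_last_castSucc, blockL_last_last, map_zero,
    zero_mul, Finset.sum_const_zero, zero_add, map_one, one_mul]

theorem eval_fForms (A : Matrix (Fin N) (Fin N) K) (b : Fin N → K) (d : ℕ)
    (x : Fin (N + 1) → K) :
    (fun i => eval x (fForms A b d i)) = (blockL A b).mulVec fun j => x j ^ d := by
  ext i
  simp [fForms, Matrix.mulVec, dotProduct]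

theorem eval_fForms_surjective [IsAlgClosed K] {A : Matrix (Fin N) (Fin N) K}
    (hA : IsUnit A.det) (b : Fin N → K) {d : ℕ} (hd : d ≠ 0) :
    Function.Surjective fun x : Fin (N + 1) → K => fun i => eval x (fForms A b d i) := by
  intro z
  obtain ⟨u, hu⟩ := Matrix.mulVec_surjective_iff_isUnit.mpr
    ((Matrix.isUnit_iff_isUnit_det _).mpr (det_blockL A b ▸ hA)) z
  choose x hx using fun j => IsAlgClosed.exists_pow_nat_eq (u j) (Nat.pos_of_ne_zero hd)
  refine ⟨x, ?_⟩
  simp only [eval_fForms, hx]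
  exact hu

theorem aeval_fForms_injective [IsAlgClosed K] {A : Matrix (Fin N) (Fin N) K}
    (hA : IsUnit A.det) (b : Fin N → K) {d : ℕ} (hd : d ≠ 0) :
    Function.Injective (aeval (fForms A b d) :
      MvPolynomial (Fin (N + 1)) K →ₐ[K] MvPolynomial (Fin (N + 1)) K) :=
  aeval_injective_of_surjective_eval (eval_fForms_surjective hA b hd)

theorem resH_aeval_fForms (A : Matrix (Fin N) (Fin N) K) (b : Fin N → K) {d : ℕ} (hd : d ≠ 0)
    (G : MvPolynomial (Fin (N + 1)) K) :
    resH (aeval (fForms A b d) G) = aeval (fun i => resH (fForms A b d i)) (resH G) := by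
  rw [resH, resH, aeval_aeval_eq, aeval_aeval_eq]
  refine congrArg (fun f => aeval f G) (funext fun i => ?_)
  by_cases hi : i = Fin.last N
  · subst hi
    rw [if_pos rfl, map_zero, fForms_last, map_pow, aeval_X, if_pos rfl, zero_pow hd]
  · rw [if_neg hi, aeval_X, resH]

theorem totalDegree_twist_le (ζ : Fin N → K) (P : MvPolynomial (Fin (N + 1)) K) :
    (twist ζ P).totalDegree ≤ P.totalDegree := by
  refine (totalDegree_aeval_le (e := 1) (fun i => ?_) P).trans_eq (one_mul _)
  split_ifs
  · exact (isHomogeneous_X K i).C_mul _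
  · exact isHomogeneous_X K i

theorem twist_inv_twist {ζ : Fin N → K} (hζ : ∀ i, ζ i ≠ 0) (P : MvPolynomial (Fin (N + 1)) K) :
    twist ζ⁻¹ (twist ζ P) = P := by
  rw [twist, twist, aeval_aeval_eq]
  convert aeval_X_left_apply P with i
  by_cases hi : (i : ℕ) < N
  · simp only [dif_pos hi, map_mul, aeval_C, aeval_X, algebraMap_eq, Pi.inv_apply]
    rw [← mul_assoc, ← C_mul, mul_inv_cancel₀ (hζ _), C_1, one_mul]
  · simp only [dif_neg hi, aeval_X]

theorem resH_twist (ζ : Fin N → K) (P : MvPolynomial (Fin (N + 1)) K) :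
    resH (twist ζ P) = twist ζ (resH P) := by
  rw [resH, resH, twist, twist, aeval_aeval_eq, aeval_aeval_eq]
  refine congrArg (fun f => aeval f P) (funext fun i => ?_)
  by_cases hi : i = Fin.last N
  · subst hi
    simp
  · simp [hi, Fin.val_lt_last hi]

-- `twistProd d F` defines `f^* f_* D`, where `F` defines `D`.
noncomputable def twistProd (d : ℕ) (F : MvPolynomial (Fin (N + 1)) K) :
    MvPolynomial (Fin (N + 1)) K :=
  ∏ ζ ∈ Fintype.piFinset (fun _ : Fin N => Polynomial.nthRootsFinset d (1 : K)), twist ζ F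

theorem twistProd_pow (d : ℕ) (F : MvPolynomial (Fin (N + 1)) K) (a : ℕ) :
    twistProd d (F ^ a) = twistProd d F ^ a := by
  simp only [twistProd, twist, map_pow, Finset.prod_pow]

theorem Associated.twistProd {F F' : MvPolynomial (Fin (N + 1)) K} (h : Associated F F')
    (d : ℕ) : Associated (twistProd d F) (twistProd d F') :=
  Associated.prod _ _ _ fun _ _ => h.map (aeval _)

theorem totalDegree_twistProd_le (d : ℕ) (F : MvPolynomial (Fin (N + 1)) K) :
    (twistProd d F).totalDegree ≤ d ^ N * F.totalDegree := by
  set S := Fintype.piFinset fun _ : Fin N => Polynomial.nthRootsFinset d (1 : K)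
  have hS : S.card ≤ d ^ N := by
    classical
    rw [Fintype.card_piFinset, Finset.prod_const, Finset.card_univ, Fintype.card_fin,
      Polynomial.nthRootsFinset_def]
    exact Nat.pow_le_pow_left
      ((Multiset.toFinset_card_le _).trans (Polynomial.card_nthRoots d 1)) N
  calc (twistProd d F).totalDegree ≤ ∑ ζ ∈ S, (twist ζ F).totalDegree :=
        totalDegree_finsetProd _ _
    _ ≤ ∑ _ζ ∈ S, F.totalDegree := Finset.sum_le_sum fun ζ _ => totalDegree_twist_le ζ F
    _ ≤ d ^ N * F.totalDegree := by
        rw [Finset.sum_const, smul_eq_mul]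
        gcongr

theorem resH_twistProd_ne_zero (d : ℕ) {F : MvPolynomial (Fin (N + 1)) K} (hF : resH F ≠ 0) :
    resH (twistProd d F) ≠ 0 := by
  rw [twistProd, resH, map_prod]
  refine Finset.prod_ne_zero_iff.mpr fun ζ hζ h0 => hF ?_
  have hζ0 : ∀ i, ζ i ≠ 0 := fun i =>
    Polynomial.ne_zero_of_mem_nthRootsFinset one_ne_zero (Fintype.mem_piFinset.mp hζ i)
  rw [← resH, resH_twist] at h0
  rw [← twist_inv_twist hζ0 (resH F), h0, twist, map_zero]

end Pullback
section IsPush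

variable {K : Type*} [NormedField K] {N d : ℕ} {A : Matrix (Fin N) (Fin N) K} {b : Fin N → K}

theorem IsPush.associated {F G : MvPolynomial (Fin (N + 1)) K} (h : IsPush A b d F G) :
    Associated (twistProd d F) (aeval (fForms A b d) G) :=
  associated_iff_exists_smul.mpr (h.imp fun _ hc => ⟨hc.1, hc.2.symm⟩)

theorem IsPush.resH_ne_zero (hd : d ≠ 0) {F G : MvPolynomial (Fin (N + 1)) K}
    (h : IsPush A b d F G) (hF : resH F ≠ 0) : resH G ≠ 0 := by
  intro hG
  obtain ⟨a, ha, hpush⟩ := associated_iff_exists_smul.mp h.associated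
  apply resH_twistProd_ne_zero d hF
  have := congrArg resH hpush
  rw [resH_aeval_fForms A b hd, hG, map_zero, resH, map_smul, ← resH] at this
  exact (smul_eq_zero.mp this).resolve_left ha

variable [IsAlgClosed K]

theorem IsPush.totalDegree_le (hA : IsUnit A.det) (hd : d ≠ 0)
    {F G : MvPolynomial (Fin (N + 1)) K} (h : IsPush A b d F G) :
    d * G.totalDegree ≤ d ^ N * F.totalDegree :=
  calc d * G.totalDegree ≤ (aeval (fForms A b d) G).totalDegree :=
        le_totalDegree_aeval (fForms_isHomogeneous A b d) (aeval_fForms_injective hA b hd) G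
    _ = (twistProd d F).totalDegree := (totalDegree_eq_of_associated h.associated).symm
    _ ≤ d ^ N * F.totalDegree := totalDegree_twistProd_le d F

theorem IsPush.associated_pow (hA : IsUnit A.det) (hd : d ≠ 0)
    {F G F' G' : MvPolynomial (Fin (N + 1)) K} (h : IsPush A b d F G) (h' : IsPush A b d F' G')
    {a a' : ℕ} (hF : Associated (F ^ a) (F' ^ a')) : Associated (G ^ a) (G' ^ a') := by
  have hT : Associated (twistProd d F ^ a) (twistProd d F' ^ a') := by
    simpa only [twistProd_pow] using hF.twistProd d
  refine associated_of_map_associated (aeval_fForms_injective hA b hd) ?_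
  rw [map_pow, map_pow]
  exact ((h.associated.pow_pow (n := a)).symm.trans hT).trans h'.associated.pow_pow

end IsPush

namespace PushChain

variable {K : Type*} [NormedField K] {N d : ℕ} {A : Matrix (Fin N) (Fin N) K} {b : Fin N → K}
  {F : MvPolynomial (Fin (N + 1)) K} {c : ℕ → MvPolynomial (Fin (N + 1)) K}

theorem resH_ne_zero (hc : PushChain A b d F c) (hd : d ≠ 0) (hF : resH F ≠ 0) (m : ℕ) :
    resH (c m) ≠ 0 := by
  induction m with
  | zero => rwa [hc.1]
  | succ m ih => exact (hc.2 m).resH_ne_zero hd ih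

variable [IsAlgClosed K]

theorem pow_mul_totalDegree_le (hc : PushChain A b d F c) (hA : IsUnit A.det) (hd : d ≠ 0)
    (m j : ℕ) : d ^ j * (c (m + j)).totalDegree ≤ d ^ (N * j) * (c m).totalDegree := by
  induction j with
  | zero => simp
  | succ j ih =>
    calc d ^ (j + 1) * (c (m + (j + 1))).totalDegree
        = d ^ j * (d * (c (m + j + 1)).totalDegree) := by ring_nf
      _ ≤ d ^ j * (d ^ N * (c (m + j)).totalDegree) :=
          Nat.mul_le_mul_left _ ((hc.2 (m + j)).totalDegree_le hA hd)
      _ = d ^ N * (d ^ j * (c (m + j)).totalDegree) := by ring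
      _ ≤ d ^ N * (d ^ (N * j) * (c m).totalDegree) := Nat.mul_le_mul_left _ ih
      _ = d ^ (N * (j + 1)) * (c m).totalDegree := by ring

theorem associated_pow (hc : PushChain A b d F c) (hA : IsUnit A.det) (hd : d ≠ 0)
    {m m' a a' : ℕ} (h : Associated (c m ^ a) (c m' ^ a')) (j : ℕ) :
    Associated (c (m + j) ^ a) (c (m' + j) ^ a') := by
  induction j with
  | zero => exact h
  | succ j ih => exact (hc.2 (m + j)).associated_pow hA hd (hc.2 (m' + j)) ih

theorem norm_lamDiv_div_le (hc : PushChain A b d F c) (hA : IsUnit A.det) (hd : d ≠ 0)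
    {C : ℝ} (hC : 0 ≤ C) {m : ℕ} (hm : |lamDiv (c m)| ≤ C * (c m).totalDegree) :
    ‖lamDiv (c m) / (d : ℝ) ^ (N * m)‖ ≤ C * F.totalDegree * ((d : ℝ)⁻¹) ^ m := by
  have hdeg : (d : ℝ) ^ m * (c m).totalDegree ≤ (d : ℝ) ^ (N * m) * F.totalDegree := by
    have := hc.pow_mul_totalDegree_le hA hd 0 m
    rw [zero_add, hc.1] at this
    exact_mod_cast this
  have hd' : (0 : ℝ) < d := by positivity
  rw [norm_div, Real.norm_eq_abs, norm_pow, Real.norm_natCast, div_le_iff₀ (by positivity),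
    inv_pow, mul_assoc, mul_assoc]
  refine hm.trans (mul_le_mul_of_nonneg_left ?_ hC)
  rw [← div_eq_inv_mul, mul_div_assoc', le_div_iff₀ (by positivity)]
  linarith

theorem exists_abs_lamDiv_le_of_preperiodic (hc : PushChain A b d F c) (hA : IsUnit A.det)
    (hd : d ≠ 0) (hF : resH F ≠ 0) {n k e e' : ℕ} {q : MvPolynomial (Fin (N + 1)) K} {a a' : K}
    (hq : Irreducible q) (ha : a ≠ 0) (ha' : a' ≠ 0) (hn : c n = a • q ^ e)
    (hnk : c (n + k) = a' • q ^ e') :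
    ∃ C, 0 ≤ C ∧ ∀ s : ℕ, |lamDiv (c (n + s * k))| ≤ C * (c (n + s * k)).totalDegree := by
  rcases eq_or_ne e 0 with rfl | he
  · -- `c n` is a constant, and the degree bound keeps all later `c m` constant.
    refine ⟨0, le_rfl, fun s => ?_⟩
    have hdeg := hc.pow_mul_totalDegree_le hA hd n (s * k)
    rw [hn, pow_zero, smul_eq_C_mul, mul_one, totalDegree_C, mul_zero, Nat.le_zero,
      mul_eq_zero, or_iff_right (pow_ne_zero _ hd)] at hdeg
    simp [lamDiv_eq_zero_of_totalDegree_eq_zero hdeg]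
  have hqn : Associated (q ^ e) (c n) := hn ▸ associated_iff_exists_smul.mpr ⟨a, ha, rfl⟩
  have hqnk : Associated (q ^ e') (c (n + k)) :=
    hnk ▸ associated_iff_exists_smul.mpr ⟨a', ha', rfl⟩
  have hH : resH q ≠ 0 := by
    have := hc.resH_ne_zero hd hF n
    rw [hn, resH, map_smul, map_pow, ← resH] at this
    exact fun h0 => this (by rw [h0, zero_pow he, smul_zero])
  have hperiod : Associated (c n ^ e') (c (n + k) ^ e) :=
    (hqn.pow_pow.symm.trans (.of_eq (by rw [← pow_mul, ← pow_mul, mul_comm]))).trans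
      hqnk.pow_pow
  have horbit : ∀ s, ∃ M, Associated (q ^ M) (c (n + s * k)) := by
    intro s
    induction s with
    | zero => exact ⟨e, by simpa using hqn⟩
    | succ s ih =>
      obtain ⟨M, hM⟩ := ih
      have hrel := hc.associated_pow hA hd hperiod (s * k)
      rw [add_right_comm, add_assoc, ← Nat.succ_mul] at hrel
      exact exists_associated_pow_of_pow_associated hq.prime he
        ((pow_mul q M e' ▸ hM.pow_pow).trans hrel)
  obtain ⟨C, hC0, hC⟩ := exists_abs_lamDiv_le_of_associated_pow hq hH
  exact ⟨C, hC0, fun s => (horbit s).elim fun M hM => hC M _ hM⟩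

end PushChain

theorem stmt19_general {K : Type*} [NormedField K] [IsAlgClosed K]
    {N d : ℕ} (hd : 2 ≤ d)
    (A : Matrix (Fin N) (Fin N) K) (hdet : A.det = 1) (b : Fin N → K)
    (F : MvPolynomial (Fin (N + 1)) K)
    (hH : resH F ≠ 0)
    (c : ℕ → MvPolynomial (Fin (N + 1)) K) (hc : PushChain A b d F c)
    (n k : ℕ) (hk : 1 ≤ k)
    (hpre : ∃ (q : MvPolynomial (Fin (N + 1)) K) (a a' : K) (e e' : ℕ),
      Irreducible q ∧ a ≠ 0 ∧ a' ≠ 0 ∧ c n = a • q ^ e ∧ c (n + k) = a' • q ^ e') :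
    ∀ l : ℝ, Tendsto (fun m => lamDiv (c m) / (d : ℝ) ^ (N * m)) atTop (nhds l) →
      l = 0 := by
  intro l hl
  have hd0 : d ≠ 0 := by omega
  have hA : IsUnit A.det := hdet ▸ isUnit_one
  obtain ⟨q, a, a', e, e', hq, ha, ha', hn, hnk⟩ := hpre
  obtain ⟨C, hC0, hC⟩ := hc.exists_abs_lamDiv_le_of_preperiodic hA hd0 hH hq ha ha' hn hnk
  have hsub : Tendsto (fun s : ℕ => n + s * k) atTop atTop :=
    tendsto_atTop_mono (fun s => le_add_left (Nat.le_mul_of_pos_right s hk)) tendsto_id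
  have hgeom : Tendsto (fun m : ℕ => C * F.totalDegree * ((d : ℝ)⁻¹) ^ m) atTop (nhds 0) := by
    simpa using (tendsto_pow_atTop_nhds_zero_of_lt_one (by positivity)
      (inv_lt_one_of_one_lt₀ (by exact_mod_cast hd))).const_mul (C * F.totalDegree)
  exact tendsto_nhds_unique (hl.comp hsub)
    (squeeze_zero_norm (fun s => hc.norm_lamDiv_div_le hA hd0 hC0 (hC s)) (hgeom.comp hsub))

/-- if `D` is an irreducible effective divisor not containing `H` which is
preperiodic under `f_*` (i.e. `f_*^{n+k}D` and `f_*^n D` are supported on the same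
irreducible hypersurface for some `n ≥ 0`, `k ≥ 1`), then
`Δ_f(D) = lim_m λ(f_*^m D)/d^{mN} = 0`. -/
theorem stmt19 {K : Type*} [NormedField K] [CompleteSpace K] [IsAlgClosed K]
    {N d δ : ℕ} (hN : 0 < N) (hd : 2 ≤ d)
    (A : Matrix (Fin N) (Fin N) K) (hdet : A.det = 1) (b : Fin N → K)
    (F : MvPolynomial (Fin (N + 1)) K) (hirr : Irreducible F)
    (hhom : F.IsHomogeneous δ) (hH : resH F ≠ 0)
    (c : ℕ → MvPolynomial (Fin (N + 1)) K) (hc : PushChain A b d F c)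
    (n k : ℕ) (hk : 1 ≤ k)
    (hpre : ∃ (q : MvPolynomial (Fin (N + 1)) K) (a a' : K) (e e' : ℕ),
      Irreducible q ∧ a ≠ 0 ∧ a' ≠ 0 ∧ c n = a • q ^ e ∧ c (n + k) = a' • q ^ e') :
    ∀ l : ℝ, Tendsto (fun m => lamDiv (c m) / (d : ℝ) ^ (N * m)) atTop (nhds l) →
      l = 0 :=
  stmt19_general hd A hdet b F hH c hc n k hk hpre
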